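/- For every prime p, the Liouville function changes sign infinitely often on n² + p; that is, there are infinitely many positive integers n with λ(n² + p) = 1, and infinitely many positive integers n with λ(n² + p) = −1. -/

import Mathlib

/-!
Sign `+1`: from `(n² + n + c)² + c = (n² + c)((n + 1)² + c)`, if `λ(n² + c) = λ((n + 1)² + c) = -1`
then `λ(m² + c) = 1` for the larger `m = n² + n + c`, so the value `1` recurs beyond every bound.

Sign `-1`: if `λ(c) = -1` (e.g. `c` prime) then `c` is not a square, so Pell's equation
`x² - c y² = 1` has infinitely many solutions; for each, `(c y)² + c = c x²` has `λ = λ(c) = -1`.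
-/

/-- The Liouville function: `λ(n) = (-1)^Ω(n)` where `Ω(n)` counts prime factors
of `n` with multiplicity. -/
def liouvilleFun (n : ℕ) : ℤ := (-1) ^ n.primeFactorsList.length

lemma liouvilleFun_mul {a b : ℕ} (ha : a ≠ 0) (hb : b ≠ 0) :
    liouvilleFun (a * b) = liouvilleFun a * liouvilleFun b := by
  rw [liouvilleFun, (Nat.perm_primeFactorsList_mul ha hb).length_eq, List.length_append, pow_add]
  rfl

lemma liouvilleFun_mul_self (r : ℕ) : liouvilleFun (r * r) = 1 := by
  rcases eq_or_ne r 0 with rfl | hr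
  · simp [liouvilleFun]
  · rw [liouvilleFun_mul hr hr, ← sq, liouvilleFun, ← pow_mul, pow_mul', neg_one_sq, one_pow]

lemma liouvilleFun_prime {p : ℕ} (hp : p.Prime) : liouvilleFun p = -1 := by
  rw [liouvilleFun, Nat.primeFactorsList_prime hp]
  rfl

lemma liouvilleFun_eq_one_or_eq_neg_one (n : ℕ) : liouvilleFun n = 1 ∨ liouvilleFun n = -1 :=
  neg_one_pow_eq_or ℤ _

lemma not_isSquare_of_liouvilleFun_eq_neg_one {c : ℕ} (hc : liouvilleFun c = -1) :
    ¬IsSquare c := by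
  rintro ⟨r, rfl⟩
  rw [liouvilleFun_mul_self] at hc
  exact absurd hc (by decide)

theorem Pell.infinite_setOf_isSquare_mul_sq_add_one {d : ℕ} (hd : ¬IsSquare d) :
    {y : ℕ | 0 < y ∧ IsSquare (d * y ^ 2 + 1)}.Infinite := by
  have hd₀ : 0 < (d : ℤ) := by
    rcases Nat.eq_zero_or_pos d with rfl | h
    · exact absurd ⟨0, rfl⟩ hd
    · exact_mod_cast h
  obtain ⟨a, ha⟩ := IsFundamental.exists_of_not_isSquare hd₀ (Int.isSquare_natCast_iff.not.mpr hd)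
  have hy_pos (n : ℕ) : 0 < (a ^ ((n : ℤ) + 1)).y := Solution₁.y_zpow_pos ha.x_pos ha.2.1 (by omega)
  have hy_mono : StrictMono fun n : ℕ ↦ (a ^ ((n : ℤ) + 1)).y.natAbs := fun m n hmn ↦
    Int.natAbs_lt_natAbs_of_nonneg_of_lt (hy_pos m).le (ha.y_strictMono (by omega))
  refine Set.infinite_of_injective_forall_mem hy_mono.injective fun n ↦
    ⟨Int.natAbs_pos.mpr (hy_pos n).ne', (a ^ ((n : ℤ) + 1)).x.natAbs, ?_⟩
  zify
  rw [abs_mul_abs_self, sq_abs, ← sq, Solution₁.prop_x]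
  ring

theorem infinite_setOf_liouvilleFun_sq_add_eq_one (c : ℕ) :
    {n : ℕ | 0 < n ∧ liouvilleFun (n ^ 2 + c) = 1}.Infinite := by
  refine Set.infinite_of_forall_exists_gt fun N ↦ ?_
  rcases liouvilleFun_eq_one_or_eq_neg_one ((N + 1) ^ 2 + c) with h₁ | h₁
  · exact ⟨N + 1, ⟨N.succ_pos, h₁⟩, N.lt_succ_self⟩
  rcases liouvilleFun_eq_one_or_eq_neg_one ((N + 2) ^ 2 + c) with h₂ | h₂
  · exact ⟨N + 2, ⟨by omega, h₂⟩, by omega⟩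
  have key : ((N + 1) ^ 2 + (N + 1) + c) ^ 2 + c = ((N + 1) ^ 2 + c) * ((N + 2) ^ 2 + c) := by ring
  refine ⟨(N + 1) ^ 2 + (N + 1) + c, ⟨by positivity, ?_⟩, by nlinarith⟩
  rw [key, liouvilleFun_mul (by positivity) (by positivity), h₁, h₂]
  norm_num

theorem infinite_setOf_liouvilleFun_sq_add_eq_neg_one {c : ℕ} (hc : liouvilleFun c = -1) :
    {n : ℕ | 0 < n ∧ liouvilleFun (n ^ 2 + c) = -1}.Infinite := by
  have hc_sq := not_isSquare_of_liouvilleFun_eq_neg_one hc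
  have hc₀ : c ≠ 0 := by rintro rfl; exact hc_sq ⟨0, rfl⟩
  refine ((Pell.infinite_setOf_isSquare_mul_sq_add_one hc_sq).image
    (mul_right_injective₀ hc₀).injOn).mono ?_
  rintro _ ⟨y, ⟨hy, x, hx⟩, rfl⟩
  have key : (c * y) ^ 2 + c = c * (x * x) := by rw [← hx]; ring
  refine ⟨by positivity, ?_⟩
  rw [key, liouvilleFun_mul hc₀ (by rw [← hx]; positivity), hc, liouvilleFun_mul_self, mul_one]

theorem liouville_sign_changes_sq_add_prime (p : ℕ) (hp : p.Prime) :
    {n : ℕ | 0 < n ∧ liouvilleFun (n ^ 2 + p) = 1}.Infinite ∧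
    {n : ℕ | 0 < n ∧ liouvilleFun (n ^ 2 + p) = -1}.Infinite :=
  ⟨infinite_setOf_liouvilleFun_sq_add_eq_one p,
    infinite_setOf_liouvilleFun_sq_add_eq_neg_one (liouvilleFun_prime hp)⟩
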